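/- Let b ≥ 1 be an integer and s ≥ s₀ > b/2. There exists a constant C(s) > 0 such that for every matrix A on ℤᵇ with |A|_s < ∞ and every sequence h : ℤᵇ → ℂ with ‖h‖_s < ∞, the action (Ah)_k := Σ_{k'∈ℤᵇ} A_k^{k'} h_{k'} is well defined (the sums converge absolutely) and satisfies ‖Ah‖_s ≤ C(s)(|A|_{s₀}‖h‖_s + |A|_s‖h‖_{s₀}). -/

import Mathlib

open scoped ENNReal

/-- `|i| := max_k |i_k|` for a multi-index `i ∈ ℤᵇ`. -/
def absIdx {b : ℕ} (i : Fin b → ℤ) : ℕ :=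
  Finset.univ.sup fun k => (i k).natAbs

/-- `⟨i⟩ := max(1, |i|)`. -/
noncomputable def wt {b : ℕ} (i : Fin b → ℤ) : ℝ := max 1 (absIdx i : ℝ)

/-- Sobolev norm `‖u‖_s := (Σ_i ⟨i⟩^{2s} |u_i|²)^{1/2}` (valued in `ℝ≥0∞`). -/
noncomputable def sobNorm {b : ℕ} (u : (Fin b → ℤ) → ℂ) (s : ℝ) : ℝ≥0∞ :=
  (∑' i : Fin b → ℤ, ENNReal.ofReal (wt i ^ (2 * s)) * (‖u i‖₊ : ℝ≥0∞) ^ 2) ^ (1/2 : ℝ)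

/-- The `s`-decay norm of a bi-infinite matrix
`|A|_s := (Σ_h ⟨h⟩^{2s} (sup_{k-k'=h} |A_k^{k'}|)²)^{1/2}` (valued in `ℝ≥0∞`). -/
noncomputable def decayNorm {b : ℕ} (A : (Fin b → ℤ) → (Fin b → ℤ) → ℂ) (s : ℝ) : ℝ≥0∞ :=
  (∑' h : Fin b → ℤ, ENNReal.ofReal (wt h ^ (2 * s)) *
      (⨆ k : Fin b → ℤ, (‖A k (k - h)‖₊ : ℝ≥0∞)) ^ 2) ^ (1/2 : ℝ)

/-!
Put `a d := sup_k |A_k^{k-d}|`; then `|(Ah)_k| ≤ (a ∗ |h|)_k`, so it suffices to prove a tame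
estimate for convolutions in weighted `ℓ²`. Cauchy–Schwarz with the weight
`m = min(⟨k-k'⟩, ⟨k'⟩)^{2s₀}` gives `(a ∗ |h|)_k² ≤ (Σ_{k'} m⁻¹) Σ_{k'} m a(k-k')² |h_{k'}|²`, and
`Σ_{k'} m⁻¹ ≤ 2 Σ_d ⟨d⟩^{-2s₀}`, which is finite because `2s₀ > b`. As
`⟨k⟩ ≤ 2 max(⟨k-k'⟩, ⟨k'⟩)`, the factor `⟨k⟩^{2s} m` is at most
`4^s (⟨k-k'⟩^{2s} ⟨k'⟩^{2s₀} + ⟨k-k'⟩^{2s₀} ⟨k'⟩^{2s})`, and summing over `k` and `k'` factors into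
`|A|_s² ‖h‖_{s₀}² + |A|_{s₀}² ‖h‖_s²`.
-/

lemma ENNReal.rpow_one_half_sq (x : ℝ≥0∞) : (x ^ (1/2 : ℝ)) ^ 2 = x := by
  rw [← ENNReal.rpow_natCast, ← ENNReal.rpow_mul]
  norm_num

open MeasureTheory in
lemma ENNReal.sq_tsum_le_tsum_inv_mul_tsum_mul_sq {ι : Type*} (f w : ι → ℝ≥0∞)
    (hw₀ : ∀ i, w i ≠ 0) (hw : ∀ i, w i ≠ ⊤) :
    (∑' i, f i) ^ 2 ≤ (∑' i, (w i)⁻¹) * ∑' i, w i * f i ^ 2 := by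
  let _ : MeasurableSpace ι := ⊤
  have hf : ∀ i, ((w i)⁻¹) ^ (1/2 : ℝ) * (w i * f i ^ 2) ^ (1/2 : ℝ) = f i := fun i => by
    rw [← ENNReal.mul_rpow_of_nonneg _ _ (by norm_num), ← mul_assoc,
      ENNReal.inv_mul_cancel (hw₀ i) (hw i), one_mul, ← ENNReal.rpow_natCast,
      ← ENNReal.rpow_mul]
    norm_num
  have holder := ENNReal.lintegral_mul_norm_pow_le (μ := Measure.count)
    (f := fun i => (w i)⁻¹) (g := fun i => w i * f i ^ 2)
    measurable_from_top.aemeasurable measurable_from_top.aemeasurable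
    (p := 1/2) (q := 1/2) (by norm_num) (by norm_num) (by norm_num)
  simp only [lintegral_count, hf] at holder
  calc (∑' i, f i) ^ 2
      ≤ ((∑' i, (w i)⁻¹) ^ (1/2 : ℝ) * (∑' i, w i * f i ^ 2) ^ (1/2 : ℝ)) ^ 2 := by gcongr
    _ = (∑' i, (w i)⁻¹) * ∑' i, w i * f i ^ 2 := by
        rw [mul_pow, ENNReal.rpow_one_half_sq, ENNReal.rpow_one_half_sq]

lemma ENNReal.tsum_comp_sub_left {G : Type*} [AddGroup G] (F : G → ℝ≥0∞) (k : G) :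
    ∑' k', F (k - k') = ∑' d, F d :=
  (Equiv.subLeft k).tsum_eq F

lemma ENNReal.tsum_tsum_mul_comp_sub {G : Type*} [AddGroup G] (F H : G → ℝ≥0∞) :
    ∑' k, ∑' k', F (k - k') * H k' = (∑' d, F d) * ∑' k', H k' := by
  rw [ENNReal.tsum_comm, ← ENNReal.tsum_mul_left]
  refine tsum_congr fun k' => ?_
  rw [ENNReal.tsum_mul_right]
  congr 1
  exact (Equiv.subRight k').tsum_eq F

lemma ENNReal.tsum_fin_pi_prod {α : Type*} (p : α → ℝ≥0∞) (n : ℕ) :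
    ∑' x : Fin n → α, ∏ i, p (x i) = (∑' a, p a) ^ n := by
  induction n with
  | zero => simp
  | succ n ih =>
      rw [← (Fin.consEquiv fun _ => α).tsum_eq, ENNReal.tsum_prod', pow_succ',
        ← ENNReal.tsum_mul_right]
      refine tsum_congr fun a => ?_
      simp only [Fin.consEquiv_apply, Fin.prod_univ_succ, Fin.cons_zero, Fin.cons_succ]
      rw [ENNReal.tsum_mul_left, ih]

lemma ENNReal.tsum_int_max_one_natAbs_rpow_neg_ne_top {q : ℝ} (hq : 1 < q) :
    ∑' m : ℤ, ((max 1 m.natAbs : ℕ) : ℝ≥0∞) ^ (-q) ≠ ⊤ := by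
  have hsum : Summable fun m : ℤ => ((max 1 m.natAbs : ℕ) : ℝ) ^ (-q) := by
    refine (Real.summable_abs_int_rpow hq).congr_cofinite ?_
    filter_upwards [(Set.finite_singleton (0 : ℤ)).compl_mem_cofinite] with m hm
    have hm : 1 ≤ m.natAbs := Int.natAbs_pos.2 hm
    simp [max_eq_right hm, Nat.cast_natAbs]
  have hterm : ∀ m : ℤ, ((max 1 m.natAbs : ℕ) : ℝ≥0∞) ^ (-q) =
      ENNReal.ofReal (((max 1 m.natAbs : ℕ) : ℝ) ^ (-q)) := fun m => by
    rw [← ENNReal.ofReal_rpow_of_pos (by positivity), ENNReal.ofReal_natCast]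
  simp only [hterm]
  rw [← ENNReal.ofReal_tsum_of_nonneg (fun m => by positivity) hsum]
  exact ENNReal.ofReal_ne_top

lemma ENNReal.rpow_mul_min_rpow_le {x y z : ℝ≥0∞} {s t : ℝ} (hs : 0 ≤ s) (hz : z ≤ x + y) :
    z ^ s * min x y ^ t ≤ 2 ^ s * (x ^ s * y ^ t + x ^ t * y ^ s) := by
  have hz2 : z ^ s ≤ 2 ^ s * max x y ^ s := by
    rw [← ENNReal.mul_rpow_of_nonneg _ _ hs, two_mul]
    exact ENNReal.rpow_le_rpow (hz.trans (add_le_add (le_max_left x y) (le_max_right x y))) hs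
  calc z ^ s * min x y ^ t ≤ 2 ^ s * (max x y ^ s * min x y ^ t) := by
        rw [← mul_assoc]; gcongr
    _ ≤ 2 ^ s * (x ^ s * y ^ t + x ^ t * y ^ s) := by
        gcongr
        rcases le_total x y with hxy | hxy
        · rw [max_eq_right hxy, min_eq_left hxy, mul_comm]; exact le_add_self
        · rw [max_eq_left hxy, min_eq_right hxy]; exact le_self_add

namespace SobolevDecay

variable {b : ℕ}

lemma natAbs_le_absIdx (x : Fin b → ℤ) (i : Fin b) : (x i).natAbs ≤ absIdx x :=
  Finset.le_sup (f := fun k => (x k).natAbs) (Finset.mem_univ i)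

lemma absIdx_add_le (x y : Fin b → ℤ) : absIdx (x + y) ≤ absIdx x + absIdx y :=
  Finset.sup_le fun k _ => (Int.natAbs_add_le _ _).trans <|
    add_le_add (natAbs_le_absIdx x k) (natAbs_le_absIdx y k)

noncomputable def ewt (i : Fin b → ℤ) : ℝ≥0∞ := (max 1 (absIdx i) : ℕ)

lemma one_le_ewt (i : Fin b → ℤ) : 1 ≤ ewt i := by
  simp [ewt]

lemma ewt_ne_top (i : Fin b → ℤ) : ewt i ≠ ⊤ := ENNReal.natCast_ne_top _

lemma ewt_ne_zero (i : Fin b → ℤ) : ewt i ≠ 0 := (zero_lt_one.trans_le (one_le_ewt i)).ne'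

lemma ewt_add_le (x y : Fin b → ℤ) : ewt (x + y) ≤ ewt x + ewt y := by
  have := absIdx_add_le x y
  unfold ewt
  exact_mod_cast (by omega : max 1 (absIdx (x + y)) ≤ max 1 (absIdx x) + max 1 (absIdx y))

lemma ofReal_wt_rpow (i : Fin b → ℤ) (t : ℝ) : ENNReal.ofReal (wt i ^ t) = ewt i ^ t := by
  have hwt : wt i = ((max 1 (absIdx i) : ℕ) : ℝ) := by simp [wt]
  rw [← ENNReal.ofReal_rpow_of_pos (by rw [hwt]; positivity), hwt, ENNReal.ofReal_natCast, ewt]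

lemma ewt_rpow_mul_min_rpow_le {s : ℝ} (t : ℝ) (hs : 0 ≤ s) (k k' : Fin b → ℤ) :
    ewt k ^ s * min (ewt (k - k')) (ewt k') ^ t ≤
      2 ^ s * (ewt (k - k') ^ s * ewt k' ^ t + ewt (k - k') ^ t * ewt k' ^ s) :=
  ENNReal.rpow_mul_min_rpow_le hs (by simpa using ewt_add_le (k - k') k')

noncomputable def weightedSqSum (f : (Fin b → ℤ) → ℝ≥0∞) (s : ℝ) : ℝ≥0∞ :=
  ∑' i, ewt i ^ (2 * s) * f i ^ 2

noncomputable def weightedNorm (f : (Fin b → ℤ) → ℝ≥0∞) (s : ℝ) : ℝ≥0∞ :=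
  weightedSqSum f s ^ (1/2 : ℝ)

noncomputable def conv (f g : (Fin b → ℤ) → ℝ≥0∞) (k : Fin b → ℤ) : ℝ≥0∞ :=
  ∑' k', f (k - k') * g k'

variable (b) in
noncomputable def invWeightSum (r : ℝ) : ℝ≥0∞ :=
  ∑' d : Fin b → ℤ, ewt d ^ (-r)

-- Dominates the lattice sum `invWeightSum b r` by the `b`-th power of a `p`-series over `ℤ`
-- with exponent `r / b`.
lemma ewt_rpow_neg_le_prod (hb : b ≠ 0) {r : ℝ} (hr : 0 ≤ r) (x : Fin b → ℤ) :
    ewt x ^ (-r) ≤ ∏ i, ((max 1 (x i).natAbs : ℕ) : ℝ≥0∞) ^ (-(r / b)) := by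
  simp only [ENNReal.rpow_neg]
  rw [← ENNReal.prod_inv_distrib fun i _ j _ _ => Or.inr (by simp), ENNReal.inv_le_inv]
  calc ∏ i, ((max 1 (x i).natAbs : ℕ) : ℝ≥0∞) ^ (r / b)
      ≤ ∏ _i : Fin b, ewt x ^ (r / b) := by
        gcongr with i
        exact Nat.cast_le.2 (max_le_max le_rfl (natAbs_le_absIdx x i))
    _ = ewt x ^ r := by
        rw [Finset.prod_const, Finset.card_univ, Fintype.card_fin, ← ENNReal.rpow_natCast,
          ← ENNReal.rpow_mul, div_mul_cancel₀ _ (by exact_mod_cast hb)]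

lemma invWeightSum_ne_top {r : ℝ} (hr : b < r) : invWeightSum b r ≠ ⊤ := by
  rcases Nat.eq_zero_or_pos b with rfl | hb
  · simp [invWeightSum, ewt_ne_zero, ewt_ne_top]
  have hb' : (0 : ℝ) < b := by exact_mod_cast hb
  refine ne_top_of_le_ne_top ?_
    (ENNReal.tsum_le_tsum (ewt_rpow_neg_le_prod hb.ne' (by linarith)))
  rw [ENNReal.tsum_fin_pi_prod (fun m : ℤ => ((max 1 m.natAbs : ℕ) : ℝ≥0∞) ^ (-(r / b)))]
  exact ENNReal.pow_ne_top
    (ENNReal.tsum_int_max_one_natAbs_rpow_neg_ne_top ((one_lt_div hb').2 hr))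

lemma tsum_inv_min_ewt_rpow_le (r : ℝ) (k : Fin b → ℤ) :
    ∑' k', (min (ewt (k - k')) (ewt k') ^ r)⁻¹ ≤ 2 * invWeightSum b r := by
  calc ∑' k', (min (ewt (k - k')) (ewt k') ^ r)⁻¹
      ≤ ∑' k', (ewt (k - k') ^ (-r) + ewt k' ^ (-r)) := by
        refine ENNReal.tsum_le_tsum fun k' => ?_
        rw [← ENNReal.rpow_neg]
        rcases min_choice (ewt (k - k')) (ewt k') with h | h <;> rw [h]
        exacts [le_self_add, le_add_self]
    _ = 2 * invWeightSum b r := by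
        rw [ENNReal.tsum_add, ENNReal.tsum_comp_sub_left (fun d => ewt d ^ (-r)), two_mul]
        rfl

lemma conv_sq_le (f g : (Fin b → ℤ) → ℝ≥0∞) (t : ℝ) (k : Fin b → ℤ) :
    conv f g k ^ 2 ≤ 2 * invWeightSum b t *
      ∑' k', min (ewt (k - k')) (ewt k') ^ t * (f (k - k') * g k') ^ 2 := by
  have hm₀ : ∀ k', min (ewt (k - k')) (ewt k') ≠ 0 := fun k' =>
    (zero_lt_one.trans_le (le_min (one_le_ewt _) (one_le_ewt _))).ne'
  have hm : ∀ k', min (ewt (k - k')) (ewt k') ≠ ⊤ := fun k' =>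
    ne_top_of_le_ne_top (ewt_ne_top k') (min_le_right _ _)
  calc conv f g k ^ 2
      ≤ (∑' k', (min (ewt (k - k')) (ewt k') ^ t)⁻¹) *
          ∑' k', min (ewt (k - k')) (ewt k') ^ t * (f (k - k') * g k') ^ 2 :=
        ENNReal.sq_tsum_le_tsum_inv_mul_tsum_mul_sq _ _
          (fun k' => (ENNReal.rpow_pos (pos_iff_ne_zero.2 (hm₀ k')) (hm k')).ne')
          (fun k' => ENNReal.rpow_ne_top_of_ne_zero (hm₀ k') (hm k'))
    _ ≤ _ := by gcongr; exact tsum_inv_min_ewt_rpow_le t k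

lemma weightedSqSum_conv_le {s : ℝ} (s₀ : ℝ) (hs : 0 ≤ s) (f g : (Fin b → ℤ) → ℝ≥0∞) :
    weightedSqSum (conv f g) s ≤ 2 * invWeightSum b (2 * s₀) * 2 ^ (2 * s) *
      (weightedSqSum f s * weightedSqSum g s₀ + weightedSqSum f s₀ * weightedSqSum g s) := by
  set Z := invWeightSum b (2 * s₀)
  calc ∑' k, ewt k ^ (2 * s) * conv f g k ^ 2
      ≤ ∑' k, ewt k ^ (2 * s) * (2 * Z *
          ∑' k', min (ewt (k - k')) (ewt k') ^ (2 * s₀) * (f (k - k') * g k') ^ 2) := by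
        gcongr with k
        exact conv_sq_le f g _ k
    _ = ∑' k, ∑' k', 2 * Z * ((ewt k ^ (2 * s) * min (ewt (k - k')) (ewt k') ^ (2 * s₀)) *
          (f (k - k') * g k') ^ 2) := tsum_congr fun k => by
        rw [← ENNReal.tsum_mul_left, ← ENNReal.tsum_mul_left]
        exact tsum_congr fun k' => by ring
    _ ≤ ∑' k, ∑' k', 2 * Z * ((2 ^ (2 * s) * (ewt (k - k') ^ (2 * s) * ewt k' ^ (2 * s₀) +
          ewt (k - k') ^ (2 * s₀) * ewt k' ^ (2 * s))) * (f (k - k') * g k') ^ 2) := by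
        gcongr ∑' k, ∑' k', _ * (?_ * _) with k k'
        exact ewt_rpow_mul_min_rpow_le _ (by positivity) k k'
    _ = 2 * Z * 2 ^ (2 * s) *
          (∑' k, ∑' k', (ewt (k - k') ^ (2 * s) * f (k - k') ^ 2) *
              (ewt k' ^ (2 * s₀) * g k' ^ 2) +
            ∑' k, ∑' k', (ewt (k - k') ^ (2 * s₀) * f (k - k') ^ 2) *
              (ewt k' ^ (2 * s) * g k' ^ 2)) := by
        rw [← ENNReal.tsum_add, ← ENNReal.tsum_mul_left]
        refine tsum_congr fun k => ?_
        rw [← ENNReal.tsum_add, ← ENNReal.tsum_mul_left]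
        exact tsum_congr fun k' => by ring
    _ = _ := by
        rw [ENNReal.tsum_tsum_mul_comp_sub (fun d => ewt d ^ (2 * s) * f d ^ 2),
          ENNReal.tsum_tsum_mul_comp_sub (fun d => ewt d ^ (2 * s₀) * f d ^ 2)]
        rfl

lemma weightedNorm_mono {f g : (Fin b → ℤ) → ℝ≥0∞} (hfg : f ≤ g) (s : ℝ) :
    weightedNorm f s ≤ weightedNorm g s := by
  unfold weightedNorm weightedSqSum
  gcongr with i
  exact hfg i

lemma weightedNorm_mono_exponent (f : (Fin b → ℤ) → ℝ≥0∞) {s t : ℝ} (hst : s ≤ t) :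
    weightedNorm f s ≤ weightedNorm f t := by
  unfold weightedNorm weightedSqSum
  gcongr with i
  exact one_le_ewt i

lemma le_weightedNorm (f : (Fin b → ℤ) → ℝ≥0∞) {s : ℝ} (hs : 0 ≤ s) (i : Fin b → ℤ) :
    f i ≤ weightedNorm f s := by
  calc f i = (f i ^ 2) ^ (1/2 : ℝ) := by
        rw [← ENNReal.rpow_natCast, ← ENNReal.rpow_mul]; norm_num
    _ ≤ (ewt i ^ (2 * s) * f i ^ 2) ^ (1/2 : ℝ) := by
        gcongr
        refine le_mul_of_one_le_left' ?_
        simpa using ENNReal.rpow_le_rpow (one_le_ewt i) (by positivity : 0 ≤ 2 * s)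
    _ ≤ weightedNorm f s := by
        unfold weightedNorm weightedSqSum
        gcongr
        exact ENNReal.le_tsum i

lemma weightedNorm_conv_le {s : ℝ} (s₀ : ℝ) (hs : 0 ≤ s) (f g : (Fin b → ℤ) → ℝ≥0∞) :
    weightedNorm (conv f g) s ≤ (2 * invWeightSum b (2 * s₀) * 2 ^ (2 * s)) ^ (1/2 : ℝ) *
      (weightedNorm f s₀ * weightedNorm g s + weightedNorm f s * weightedNorm g s₀) := by
  have hhalf : (0 : ℝ) ≤ 1/2 := by norm_num
  unfold weightedNorm
  set K := 2 * invWeightSum b (2 * s₀) * 2 ^ (2 * s)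
  set P := weightedSqSum f s₀ * weightedSqSum g s
  set Q := weightedSqSum f s * weightedSqSum g s₀
  calc weightedSqSum (conv f g) s ^ (1/2 : ℝ)
      ≤ (K * (P + Q)) ^ (1/2 : ℝ) := by
        gcongr
        rw [add_comm P]
        exact weightedSqSum_conv_le s₀ hs f g
    _ = K ^ (1/2 : ℝ) * (P + Q) ^ (1/2 : ℝ) := ENNReal.mul_rpow_of_nonneg _ _ hhalf
    _ ≤ K ^ (1/2 : ℝ) * (P ^ (1/2 : ℝ) + Q ^ (1/2 : ℝ)) := by
        gcongr
        exact ENNReal.rpow_add_le_add_rpow _ _ hhalf (by norm_num)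
    _ = _ := by
        simp only [P, Q, ENNReal.mul_rpow_of_nonneg _ _ hhalf]

noncomputable def diagSup (A : (Fin b → ℤ) → (Fin b → ℤ) → ℂ) (d : Fin b → ℤ) : ℝ≥0∞ :=
  ⨆ k, ‖A k (k - d)‖ₑ

lemma sobNorm_eq (u : (Fin b → ℤ) → ℂ) (s : ℝ) :
    sobNorm u s = weightedNorm (fun i => ‖u i‖ₑ) s := by
  simp only [sobNorm, weightedNorm, weightedSqSum, ofReal_wt_rpow, enorm_eq_nnnorm]

lemma decayNorm_eq (A : (Fin b → ℤ) → (Fin b → ℤ) → ℂ) (s : ℝ) :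
    decayNorm A s = weightedNorm (diagSup A) s := by
  simp only [decayNorm, weightedNorm, weightedSqSum, diagSup, ofReal_wt_rpow, enorm_eq_nnnorm]

lemma enorm_le_diagSup (A : (Fin b → ℤ) → (Fin b → ℤ) → ℂ) (k k' : Fin b → ℤ) :
    ‖A k k'‖ₑ ≤ diagSup A (k - k') := by
  unfold diagSup
  exact le_iSup_of_le k (by rw [sub_sub_cancel])

lemma enorm_mul_le_diagSup_mul (A : (Fin b → ℤ) → (Fin b → ℤ) → ℂ) (h : (Fin b → ℤ) → ℂ)
    (k k' : Fin b → ℤ) : ‖A k k' * h k'‖ₑ ≤ diagSup A (k - k') * ‖h k'‖ₑ := by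
  rw [enorm_mul]
  gcongr
  exact enorm_le_diagSup A k k'

lemma summable_norm_mul_of_conv_ne_top (A : (Fin b → ℤ) → (Fin b → ℤ) → ℂ)
    (h : (Fin b → ℤ) → ℂ) {k : Fin b → ℤ} (hk : conv (diagSup A) (fun i => ‖h i‖ₑ) k ≠ ⊤) :
    Summable fun k' => ‖A k k' * h k'‖ :=
  Summable.of_enorm <| ne_top_of_le_ne_top hk <| ENNReal.tsum_le_tsum fun k' => by
    simpa only [enorm_norm] using enorm_mul_le_diagSup_mul A h k k'

lemma enorm_tsum_le_conv (A : (Fin b → ℤ) → (Fin b → ℤ) → ℂ) (h : (Fin b → ℤ) → ℂ)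
    (k : Fin b → ℤ) :
    ‖∑' k', A k k' * h k'‖ₑ ≤ conv (diagSup A) (fun i => ‖h i‖ₑ) k :=
  tsum_of_enorm_bounded ENNReal.summable.hasSum (enorm_mul_le_diagSup_mul A h k)

end SobolevDecay

open SobolevDecay in
theorem stmt5_general (b : ℕ) (s₀ s : ℝ) (hs₀ : (b : ℝ) / 2 < s₀) (hs : s₀ ≤ s) :
    ∃ C : ℝ, 0 < C ∧
      ∀ (A : (Fin b → ℤ) → (Fin b → ℤ) → ℂ) (h : (Fin b → ℤ) → ℂ),
        decayNorm A s < ⊤ → sobNorm h s < ⊤ →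
        (∀ k : Fin b → ℤ, Summable fun k' : Fin b → ℤ => ‖A k k' * h k'‖) ∧
        sobNorm (fun k => ∑' k' : Fin b → ℤ, A k k' * h k') s ≤
          ENNReal.ofReal C * (decayNorm A s₀ * sobNorm h s + decayNorm A s * sobNorm h s₀) := by
  have hs_nonneg : 0 ≤ s := by linarith [show (0 : ℝ) ≤ b / 2 by positivity]
  set E : ℝ≥0∞ := (2 * invWeightSum b (2 * s₀) * 2 ^ (2 * s)) ^ (1/2 : ℝ)
  have hE : E ≠ ⊤ := by
    have hZ : invWeightSum b (2 * s₀) ≠ ⊤ := invWeightSum_ne_top (by linarith)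
    finiteness
  refine ⟨E.toReal + 1, by positivity, fun A h hA hh => ?_⟩
  simp only [decayNorm_eq, sobNorm_eq] at hA hh ⊢
  set F := diagSup A
  set G : (Fin b → ℤ) → ℝ≥0∞ := fun i => ‖h i‖ₑ
  have hbound : weightedNorm (conv F G) s ≤
      E * (weightedNorm F s₀ * weightedNorm G s + weightedNorm F s * weightedNorm G s₀) :=
    weightedNorm_conv_le s₀ hs_nonneg F G
  have hfin : weightedNorm (conv F G) s ≠ ⊤ := by
    have hA₀ := (weightedNorm_mono_exponent F hs).trans_lt hA
    have hh₀ := (weightedNorm_mono_exponent G hs).trans_lt hh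
    exact ne_top_of_le_ne_top (by finiteness) hbound
  refine ⟨fun k => summable_norm_mul_of_conv_ne_top A h
    (ne_top_of_le_ne_top hfin (le_weightedNorm _ hs_nonneg k)), ?_⟩
  have hEC : E ≤ ENNReal.ofReal (E.toReal + 1) :=
    (ENNReal.le_ofReal_iff_toReal_le hE (by positivity)).2 (by linarith)
  calc weightedNorm (fun k => ‖∑' k', A k k' * h k'‖ₑ) s
      ≤ weightedNorm (conv F G) s := weightedNorm_mono (enorm_tsum_le_conv A h) s
    _ ≤ _ := hbound.trans (by gcongr)

theorem stmt5 (b : ℕ) (hb : 1 ≤ b) (s₀ s : ℝ) (hs₀ : (b : ℝ) / 2 < s₀) (hs : s₀ ≤ s) :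
    ∃ C : ℝ, 0 < C ∧
      ∀ (A : (Fin b → ℤ) → (Fin b → ℤ) → ℂ) (h : (Fin b → ℤ) → ℂ),
        decayNorm A s < ⊤ → sobNorm h s < ⊤ →
        (∀ k : Fin b → ℤ, Summable fun k' : Fin b → ℤ => ‖A k k' * h k'‖) ∧
        sobNorm (fun k => ∑' k' : Fin b → ℤ, A k k' * h k') s ≤
          ENNReal.ofReal C * (decayNorm A s₀ * sobNorm h s + decayNorm A s * sobNorm h s₀) :=
  stmt5_general b s₀ s hs₀ hs
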